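/- In a regular category C, let f_A : A₁ → A₀, f_B : B₁ → B₀ and f_C : C₁ → C₀ be regular epimorphisms, let α = (α_⊤, α_⊥) : f_A → f_B be a commutative square, and let β = (β_⊤, β_⊥) : f_C → f_B be a double extension. Form the componentwise pullbacks P₁ = C₁ ×_{B₁} A₁ and P₀ = C₀ ×_{B₀} A₀ with the induced morphism f : P₁ → P₀, and let α′ : f → f_C be the square of projections (the pullback of α along β). If α′ is a double extension, then α is a double extension. -/

import Mathlib

open CategoryTheory CategoryTheory.Limits

universe v u

namespace Paper

variable {C : Type u} [Category.{v} C]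

/-- `f` is a regular epimorphism. -/
def IsRegEpi {X Y : C} (f : X ⟶ Y) : Prop := Nonempty (RegularEpi f)

/-- A regular category: a finitely complete category with coequalizers of kernel pairs in
which regular epimorphisms are stable under pullback. -/
class RegularCat (C : Type u) [Category.{v} C] [HasFiniteLimits C] : Prop where
  hasCoeqOfKernelPairs : ∀ {X Y : C} (f : X ⟶ Y),
    HasCoequalizer (pullback.fst f f) (pullback.snd f f)
  regEpiPullbackStable : ∀ {X Y Z : C} (f : X ⟶ Y) (g : Z ⟶ Y),
    IsRegEpi f → IsRegEpi (pullback.snd f g)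

/-- An internal equivalence relation given by a parallel pair `r₁ r₂ : R ⟶ X`. -/
structure IsEquivRel [HasFiniteLimits C] {R X : C} (r₁ r₂ : R ⟶ X) : Prop where
  jointlyMono : Mono (prod.lift r₁ r₂)
  refl : ∃ d : X ⟶ R, d ≫ r₁ = 𝟙 X ∧ d ≫ r₂ = 𝟙 X
  symm : ∃ s : R ⟶ R, s ≫ r₁ = r₂ ∧ s ≫ r₂ = r₁
  trans : ∃ t : pullback r₂ r₁ ⟶ R,
    t ≫ r₁ = pullback.fst r₂ r₁ ≫ r₁ ∧ t ≫ r₂ = pullback.snd r₂ r₁ ≫ r₂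

/-- A Barr exact category: a regular category in which every internal equivalence relation
is effective (i.e. is a kernel pair). -/
class BarrExact (C : Type u) [Category.{v} C] [HasFiniteLimits C] : Prop extends RegularCat C where
  equivRelEffective : ∀ {R X : C} (r₁ r₂ : R ⟶ X), IsEquivRel r₁ r₂ →
    ∃ (Y : C) (f : X ⟶ Y), IsKernelPair f r₁ r₂

section DoubleExt
variable [HasFiniteLimits C]

/-- A double extension: a commutative square `αt ≫ fB = fA ≫ αb` of regular epimorphisms
whose comparison morphism to the pullback is also a regular epimorphism. -/
structure IsDoubleExt {A₁ A₀ B₁ B₀ : C} (fA : A₁ ⟶ A₀) (fB : B₁ ⟶ B₀)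
    (αt : A₁ ⟶ B₁) (αb : A₀ ⟶ B₀) : Prop where
  w : αt ≫ fB = fA ≫ αb
  left : IsRegEpi fA
  right : IsRegEpi fB
  top : IsRegEpi αt
  bot : IsRegEpi αb
  comparison : IsRegEpi (pullback.lift fA αt w.symm : A₁ ⟶ pullback αb fB)

end DoubleExt

/-- The category `Ext C` of extensions: the full subcategory of the arrow category of `C`
determined by the regular epimorphisms. -/
abbrev ExtCat (C : Type u) [Category.{v} C] : Type max u v :=
  ObjectProperty.FullSubcategory (fun f : Arrow C => IsRegEpi f.hom)

/-- An object of `Ext C` from a regular epimorphism. -/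
def ExtCat.mk' {X Y : C} (f : X ⟶ Y) (hf : IsRegEpi f) : ExtCat C :=
  ⟨Arrow.mk f, hf⟩

/-- The top (domain) component of a morphism of `Ext C`. -/
def ExtCat.homLeft {f g : ExtCat C} (φ : f ⟶ g) : f.obj.left ⟶ g.obj.left :=
  CommaMorphism.left φ.hom

/-- The bottom (codomain) component of a morphism of `Ext C`. -/
def ExtCat.homRight {f g : ExtCat C} (φ : f ⟶ g) : f.obj.right ⟶ g.obj.right :=
  CommaMorphism.right φ.hom

lemma ExtCat.homLeft_comp {f g h : ExtCat C} (a : f ⟶ g) (b : g ⟶ h) :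
    ExtCat.homLeft (a ≫ b) = ExtCat.homLeft a ≫ ExtCat.homLeft b := rfl

lemma ExtCat.homRight_comp {f g h : ExtCat C} (a : f ⟶ g) (b : g ⟶ h) :
    ExtCat.homRight (a ≫ b) = ExtCat.homRight a ≫ ExtCat.homRight b := rfl

lemma ExtCat.hom_w {f g : ExtCat C} (φ : f ⟶ g) :
    ExtCat.homLeft φ ≫ g.obj.hom = f.obj.hom ≫ ExtCat.homRight φ :=
  CommaMorphism.w φ.hom

/-- A morphism of `Ext C` from a commutative square in `C`. -/
def ExtCat.homMk' {X₁ X₀ Y₁ Y₀ : C} {f : X₁ ⟶ X₀} {g : Y₁ ⟶ Y₀}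
    {hf : IsRegEpi f} {hg : IsRegEpi g}
    (u : X₁ ⟶ Y₁) (v : X₀ ⟶ Y₀) (w : u ≫ g = f ≫ v) :
    ExtCat.mk' f hf ⟶ ExtCat.mk' g hg :=
  ObjectProperty.homMk (Arrow.homMk (u := u) (v := v) w)

/-- A (commutative) square in `C`, with left vertical `left : A₁ ⟶ A₀`, right vertical
`right : B₁ ⟶ B₀`, top horizontal `top : A₁ ⟶ B₁` and bottom horizontal `bot : A₀ ⟶ B₀`. -/
structure Sq (C : Type u) [Category.{v} C] where
  A₁ : C
  A₀ : C
  B₁ : C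
  B₀ : C
  left : A₁ ⟶ A₀
  right : B₁ ⟶ B₀
  top : A₁ ⟶ B₁
  bot : A₀ ⟶ B₀
  w : top ≫ right = left ≫ bot

/-- The square is a double extension. -/
def Sq.IsDE [HasFiniteLimits C] (s : Sq C) : Prop :=
  IsDoubleExt s.left s.right s.top s.bot

/-- A commutative cube, presented as a morphism of squares `Φ : s ⟶ t`. -/
structure SqHom (s t : Sq C) where
  h₁₁ : s.A₁ ⟶ t.A₁
  h₁₀ : s.A₀ ⟶ t.A₀
  h₀₁ : s.B₁ ⟶ t.B₁
  h₀₀ : s.B₀ ⟶ t.B₀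
  wA : h₁₁ ≫ t.left = s.left ≫ h₁₀
  wB : h₀₁ ≫ t.right = s.right ≫ h₀₀
  wt : h₁₁ ≫ t.top = s.top ≫ h₀₁
  wb : h₁₀ ≫ t.bot = s.bot ≫ h₀₀

/-- Composition of cubes (as morphisms of squares). -/
def SqHom.comp {s t u : Sq C} (Φ : SqHom s t) (Ψ : SqHom t u) : SqHom s u where
  h₁₁ := Φ.h₁₁ ≫ Ψ.h₁₁
  h₁₀ := Φ.h₁₀ ≫ Ψ.h₁₀
  h₀₁ := Φ.h₀₁ ≫ Ψ.h₀₁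
  h₀₀ := Φ.h₀₀ ≫ Ψ.h₀₀
  wA := by rw [Category.assoc, Ψ.wA, ← Category.assoc, Φ.wA, Category.assoc]
  wB := by rw [Category.assoc, Ψ.wB, ← Category.assoc, Φ.wB, Category.assoc]
  wt := by rw [Category.assoc, Ψ.wt, ← Category.assoc, Φ.wt, Category.assoc]
  wb := by rw [Category.assoc, Ψ.wb, ← Category.assoc, Φ.wb, Category.assoc]

section Cube
variable [HasFiniteLimits C]

/-- Seen as a morphism `(σ, β) : s ⟶ t` between the double extensions `s` (as the arrow
`s.left → s.right`) and `t`, the face `σ` of the cube: the square from `s.left` to `t.left`. -/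
def SqHom.sigmaSq {s t : Sq C} (Φ : SqHom s t) : Sq C where
  A₁ := s.A₁
  A₀ := s.A₀
  B₁ := t.A₁
  B₀ := t.A₀
  left := s.left
  right := t.left
  top := Φ.h₁₁
  bot := Φ.h₁₀
  w := Φ.wA

/-- The face `β` of the cube: the square from `s.right` to `t.right`. -/
def SqHom.betaSq {s t : Sq C} (Φ : SqHom s t) : Sq C where
  A₁ := s.B₁
  A₀ := s.B₀
  B₁ := t.B₁
  B₀ := t.B₀
  left := s.right
  right := t.right
  top := Φ.h₀₁
  bot := Φ.h₀₀
  w := Φ.wB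

/-- Top component of the componentwise pullback of `t` (i.e. `α`) and `betaSq Φ` (i.e. `β`). -/
noncomputable def SqHom.P₁ {s t : Sq C} (Φ : SqHom s t) : C := pullback t.top Φ.h₀₁

/-- Bottom component of the componentwise pullback of `α` and `β`. -/
noncomputable def SqHom.P₀ {s t : Sq C} (Φ : SqHom s t) : C := pullback t.bot Φ.h₀₀

/-- The induced arrow between the components of the componentwise pullback of `α` and `β`. -/
noncomputable def SqHom.fP {s t : Sq C} (Φ : SqHom s t) : Φ.P₁ ⟶ Φ.P₀ :=
  pullback.map t.top Φ.h₀₁ t.bot Φ.h₀₀ t.left s.right t.right t.w Φ.wB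

/-- The top comparison morphism. -/
noncomputable def SqHom.c₁ {s t : Sq C} (Φ : SqHom s t) : s.A₁ ⟶ Φ.P₁ :=
  pullback.lift Φ.h₁₁ s.top Φ.wt

/-- The bottom comparison morphism. -/
noncomputable def SqHom.c₀ {s t : Sq C} (Φ : SqHom s t) : s.A₀ ⟶ Φ.P₀ :=
  pullback.lift Φ.h₁₀ s.bot Φ.wb

lemma SqHom.comp_w {s t : Sq C} (Φ : SqHom s t) : Φ.c₁ ≫ Φ.fP = s.left ≫ Φ.c₀ := by
  apply pullback.hom_ext
  · have h1 : Φ.c₁ ≫ pullback.fst t.top Φ.h₀₁ = Φ.h₁₁ := pullback.lift_fst _ _ _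
    have h2 : Φ.fP ≫ pullback.fst t.bot Φ.h₀₀ = pullback.fst t.top Φ.h₀₁ ≫ t.left :=
      pullback.lift_fst _ _ _
    have h0 : Φ.c₀ ≫ pullback.fst t.bot Φ.h₀₀ = Φ.h₁₀ := pullback.lift_fst _ _ _
    refine (Category.assoc (Φ.c₁) Φ.fP (pullback.fst t.bot Φ.h₀₀)).trans ?_
    refine Eq.trans ?_ (Category.assoc s.left Φ.c₀ (pullback.fst t.bot Φ.h₀₀)).symm
    rw [h2, h0, ← Φ.wA, ← h1]
    exact (Category.assoc _ _ _).symm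
  · have h1 : Φ.c₁ ≫ pullback.snd t.top Φ.h₀₁ = s.top := pullback.lift_snd _ _ _
    have h2 : Φ.fP ≫ pullback.snd t.bot Φ.h₀₀ = pullback.snd t.top Φ.h₀₁ ≫ s.right :=
      pullback.lift_snd _ _ _
    have h0 : Φ.c₀ ≫ pullback.snd t.bot Φ.h₀₀ = s.bot := pullback.lift_snd _ _ _
    refine (Category.assoc (Φ.c₁) Φ.fP (pullback.snd t.bot Φ.h₀₀)).trans ?_
    refine Eq.trans ?_ (Category.assoc s.left Φ.c₀ (pullback.snd t.bot Φ.h₀₀)).symm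
    rw [h2, h0, ← s.w, ← h1]
    exact (Category.assoc _ _ _).symm

/-- The comparison square of the cube `Φ`, from `s.left` to the componentwise pullback
of `α` and `β`. -/
noncomputable def SqHom.compSq {s t : Sq C} (Φ : SqHom s t) : Sq C where
  A₁ := s.A₁
  A₀ := s.A₀
  B₁ := Φ.P₁
  B₀ := Φ.P₀
  left := s.left
  right := Φ.fP
  top := Φ.c₁
  bot := Φ.c₀
  w := Φ.comp_w

/-- A `3`-cubical extension: the two opposite faces `γ = s` and `α = t`, the two connecting
faces `σ` and `β`, and the comparison square to the componentwise pullback of `α` and `β`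
are all double extensions. -/
def SqHom.Is3CubExt {s t : Sq C} (Φ : SqHom s t) : Prop :=
  s.IsDE ∧ t.IsDE ∧ Φ.sigmaSq.IsDE ∧ Φ.betaSq.IsDE ∧ Φ.compSq.IsDE

end Cube

/-- The cube `Φ : s ⟶ t` is a limit cube: the cone from the initial vertex `s.A₁` on the
diagram formed by the remaining seven vertices is a limit cone. -/
def SqHom.IsLimitCube {s t : Sq C} (Φ : SqHom s t) : Prop :=
  ∀ (W : C) (wA₀ : W ⟶ s.A₀) (wB₁ : W ⟶ s.B₁) (wtA₁ : W ⟶ t.A₁),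
    wA₀ ≫ s.bot = wB₁ ≫ s.right →
    wA₀ ≫ Φ.h₁₀ = wtA₁ ≫ t.left →
    wB₁ ≫ Φ.h₀₁ = wtA₁ ≫ t.top →
    ∃! u : W ⟶ s.A₁, u ≫ s.left = wA₀ ∧ u ≫ s.top = wB₁ ∧ u ≫ Φ.h₁₁ = wtA₁

/-- A discrete fibration (of order 3): a `3`-cubical extension which is a limit cube. -/
def SqHom.IsDiscFib [HasFiniteLimits C] {s t : Sq C} (Φ : SqHom s t) : Prop :=
  Φ.Is3CubExt ∧ Φ.IsLimitCube
section Galois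
variable [HasFiniteLimits C]

/-- A strongly E-Birkhoff Galois structure on `C`: a full replete reflective subcategory
(given by the predicate `inB`, the reflector `F` and the unit `η`) such that every unit
component is a regular epimorphism and every naturality square of the unit at a regular
epimorphism is a double extension. -/
structure BirkhoffStructure (C : Type u) [Category.{v} C] [HasFiniteLimits C] where
  inB : C → Prop
  replete : ∀ {X Y : C}, inB X → (X ≅ Y) → inB Y
  F : C ⥤ C
  η : 𝟭 C ⟶ F
  obj_inB : ∀ A : C, inB (F.obj A)
  unit_regEpi : ∀ A : C, IsRegEpi (η.app A)
  univ : ∀ {A X : C}, inB X → ∀ g : A ⟶ X, ∃! h : F.obj A ⟶ X, η.app A ≫ h = g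
  stronglyBirkhoff : ∀ {A B : C} (f : A ⟶ B), IsRegEpi f →
    IsDoubleExt f (F.map f) (η.app A) (η.app B)

/-- A trivial covering: a regular epimorphism whose unit naturality square is a pullback. -/
def TrivialCovering (G : BirkhoffStructure C) {T E : C} (t : T ⟶ E) : Prop :=
  IsRegEpi t ∧ IsPullback (G.η.app T) t (G.F.map t) (G.η.app E)

/-- A covering: a regular epimorphism whose pullback along some regular epimorphism is a
trivial covering. -/
def Covering (G : BirkhoffStructure C) {A B : C} (c : A ⟶ B) : Prop :=
  IsRegEpi c ∧ ∃ (E : C) (e : E ⟶ B), IsRegEpi e ∧ TrivialCovering G (pullback.snd c e)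

end Galois

/-- The underlying square in `C` of a morphism of `Ext C`. -/
def sqOfHom {f g : ExtCat C} (φ : f ⟶ g) : Sq C where
  A₁ := f.obj.left
  A₀ := f.obj.right
  B₁ := g.obj.left
  B₀ := g.obj.right
  left := f.obj.hom
  right := g.obj.hom
  top := ExtCat.homLeft φ
  bot := ExtCat.homRight φ
  w := ExtCat.hom_w φ

/-- The underlying cube in `C` of a naturality square in `Ext C` of a natural
transformation `η₁ : 𝟭 (Ext C) ⟶ F₁` at a morphism `φ : f ⟶ g` of `Ext C`. -/
def natCube (F₁ : ExtCat C ⥤ ExtCat C) (η₁ : 𝟭 (ExtCat C) ⟶ F₁) {f g : ExtCat C}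
    (φ : f ⟶ g) : SqHom (sqOfHom φ) (sqOfHom (F₁.map φ)) where
  h₁₁ := ExtCat.homLeft (η₁.app f)
  h₁₀ := ExtCat.homRight (η₁.app f)
  h₀₁ := ExtCat.homLeft (η₁.app g)
  h₀₀ := ExtCat.homRight (η₁.app g)
  wA := ExtCat.hom_w (η₁.app f)
  wB := ExtCat.hom_w (η₁.app g)
  wt := by
    have h := congrArg ExtCat.homLeft (η₁.naturality φ)
    rw [ExtCat.homLeft_comp, ExtCat.homLeft_comp] at h
    exact h.symm
  wb := by
    have h := congrArg ExtCat.homRight (η₁.naturality φ)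
    rw [ExtCat.homRight_comp, ExtCat.homRight_comp] at h
    exact h.symm

section LevelOne
variable [HasFiniteLimits C]

/-- The level-one Galois structure induced by a strongly E-Birkhoff Galois structure `G`:
the coverings form a reflective subcategory of `Ext C`, with reflector `F₁` and unit `η₁`,
every unit component is a double extension, and the reflection is strongly E₂-Birkhoff. -/
structure LevelOne (G : BirkhoffStructure C) where
  F₁ : ExtCat C ⥤ ExtCat C
  η₁ : 𝟭 (ExtCat C) ⟶ F₁
  obj_cov : ∀ f : ExtCat C, Covering G (F₁.obj f).obj.hom
  univ : ∀ {f x : ExtCat C}, Covering G x.obj.hom → ∀ g : f ⟶ x,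
    ∃! h : F₁.obj f ⟶ x, η₁.app f ≫ h = g
  unit_DE : ∀ f : ExtCat C, (sqOfHom (η₁.app f)).IsDE
  stronglyBirkhoff : ∀ {f g : ExtCat C} (φ : f ⟶ g), (sqOfHom φ).IsDE →
    (natCube F₁ η₁ φ).Is3CubExt

/-- A trivial double covering: a morphism of `Ext C` whose underlying square is a double
extension and whose `η₁`-naturality square is a pullback in `Ext C`. -/
def TrivDoubleCov {G : BirkhoffStructure C} (L : LevelOne G) {f g : ExtCat C}
    (φ : f ⟶ g) : Prop :=
  (sqOfHom φ).IsDE ∧ IsPullback (L.η₁.app f) φ (L.F₁.map φ) (L.η₁.app g)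

/-- A double covering: a double extension `α : d ⟶ c` in `Ext C` such that the pullback of
`α` along some double extension `γ : e ⟶ c` is a trivial double covering. -/
def DoubleCov {G : BirkhoffStructure C} (L : LevelOne G) {d c : ExtCat C}
    (α : d ⟶ c) : Prop :=
  (sqOfHom α).IsDE ∧ ∃ (e : ExtCat C) (γ : e ⟶ c), (sqOfHom γ).IsDE ∧
    ∃ (p : ExtCat C) (pγ : p ⟶ e) (pα : p ⟶ d),
      IsPullback pγ pα γ α ∧ TrivDoubleCov L pγ

end LevelOne

/-!
In a regular category regular epimorphisms descend along regular epimorphisms: if `g` pulls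
back along a regular epi to a regular epi, then `g` is one, since its composite with the
(regular, hence epi) projection is a composite of regular epis. This gives `αt` and `αb`.
For the comparison `A₁ ⟶ A₀ ×_{B₀} B₁` of `α`: precomposed with the regular epi `P₁ ⟶ A₁`,
it becomes the comparison of `α′` followed by a base change of `βt`, a composite of regular
epis.
-/

section

variable [HasFiniteLimits C]

theorem isRegEpi_iff_effectiveEpi {X Y : C} (f : X ⟶ Y) : IsRegEpi f ↔ EffectiveEpi f :=
  ⟨fun h => (isRegularEpi_iff_effectiveEpi f).mp ⟨h⟩,
    fun h => ((isRegularEpi_iff_effectiveEpi f).mpr h).regularEpi⟩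

instance RegularCat.preregular [RegularCat C] : Preregular C where
  exists_fac f g _ :=
    ⟨pullback g f, pullback.snd g f,
      (isRegEpi_iff_effectiveEpi _).mp <|
        RegularCat.regEpiPullbackStable g f ((isRegEpi_iff_effectiveEpi g).mpr ‹_›),
      pullback.fst g f, pullback.condition⟩

theorem IsRegEpi.epi {X Y : C} {f : X ⟶ Y} (hf : IsRegEpi f) : Epi f :=
  have := (isRegEpi_iff_effectiveEpi f).mp hf
  inferInstance

theorem IsRegEpi.comp [RegularCat C] {X Y Z : C} {f : X ⟶ Y} {g : Y ⟶ Z}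
    (hf : IsRegEpi f) (hg : IsRegEpi g) : IsRegEpi (f ≫ g) := by
  rw [isRegEpi_iff_effectiveEpi] at hf hg ⊢
  infer_instance

theorem IsRegEpi.of_epi_comp {X Y Z : C} {e : X ⟶ Y} {g : Y ⟶ Z} [Epi e]
    (h : IsRegEpi (e ≫ g)) : IsRegEpi g := by
  rw [isRegEpi_iff_effectiveEpi] at h ⊢
  exact effectiveEpi_of_effectiveEpi_epi_comp g e

theorem isRegEpi_snd_of_isPullback [RegularCat C] {P X Y Z : C} {fst : P ⟶ X} {snd : P ⟶ Y}
    {f : X ⟶ Z} {g : Y ⟶ Z} (h : IsPullback fst snd f g) (hf : IsRegEpi f) :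
    IsRegEpi snd := by
  rw [← h.isoPullback_hom_snd]
  exact ((isRegEpi_iff_effectiveEpi _).mpr inferInstance).comp
    (RegularCat.regEpiPullbackStable f g hf)

theorem isRegEpi_of_isPullback_of_isRegEpi_fst [RegularCat C] {P X Y Z : C} {fst : P ⟶ X}
    {snd : P ⟶ Y} {f : X ⟶ Z} {g : Y ⟶ Z} (h : IsPullback fst snd f g) (hf : IsRegEpi f)
    (hfst : IsRegEpi fst) : IsRegEpi g :=
  have := (isRegEpi_snd_of_isPullback h hf).epi
  IsRegEpi.of_epi_comp (h.w ▸ hfst.comp hf)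

/-- The comparison object `(X₀ ×_{B₀} A₀) ×_{X₀} X₁` of the pullback of a square `α` along a
square `β` is the base change of the comparison object `A₀ ×_{B₀} B₁` of `α` along `βt`. -/
theorem isPullback_snd_pullbackMap {X₁ X₀ B₁ B₀ A₀ : C}
    {fC : X₁ ⟶ X₀} {fB : B₁ ⟶ B₀} {βt : X₁ ⟶ B₁} {βb : X₀ ⟶ B₀} (w : βt ≫ fB = fC ≫ βb)
    (αb : A₀ ⟶ B₀) :
    IsPullback (pullback.snd (pullback.fst βb αb) fC)
      (pullback.map _ _ _ _ (pullback.snd βb αb) βt βb pullback.condition w.symm)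
      βt (pullback.snd αb fB) := by
  have outer := (IsPullback.of_hasPullback (pullback.fst βb αb) fC).flip.paste_vert
    (IsPullback.of_hasPullback βb αb)
  rw [← w] at outer
  exact IsPullback.of_bot (by rwa [pullback.lift_fst]) (pullback.lift_snd _ _ _).symm
    (IsPullback.of_hasPullback αb fB).flip

end

theorem statement_1_general {C : Type u} [Category.{v} C] [HasFiniteLimits C] [RegularCat C]
    {A₁ A₀ B₁ B₀ X₁ X₀ : C}
    (fA : A₁ ⟶ A₀) (fB : B₁ ⟶ B₀) (fC : X₁ ⟶ X₀)
    (hfA : IsRegEpi fA) (hfB : IsRegEpi fB)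
    (αt : A₁ ⟶ B₁) (αb : A₀ ⟶ B₀) (wα : αt ≫ fB = fA ≫ αb)
    (βt : X₁ ⟶ B₁) (βb : X₀ ⟶ B₀) (hβ : IsDoubleExt fC fB βt βb)
    -- the componentwise pullback `P₁ = X₁ ×_{B₁} A₁`, `P₀ = X₀ ×_{B₀} A₀` and the induced
    -- morphism `f : P₁ ⟶ P₀`:
    (f : pullback βt αt ⟶ pullback βb αb)
    (hf : f = pullback.map βt αt βb αb fC fA fB hβ.w wα)
    -- `α′ : f ⟶ f_C`, the pullback of `α` along `β`, is a double extension: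
    (h : IsDoubleExt f fC (pullback.fst βt αt) (pullback.fst βb αb)) :
    IsDoubleExt fA fB αt αb := by
  have htop := IsPullback.of_hasPullback βt αt
  refine ⟨wα, hfA, hfB, isRegEpi_of_isPullback_of_isRegEpi_fst htop hβ.top h.top,
    isRegEpi_of_isPullback_of_isRegEpi_fst (IsPullback.of_hasPullback βb αb) hβ.bot h.bot,
    ?_⟩
  have hq := isRegEpi_snd_of_isPullback (isPullback_snd_pullbackMap hβ.w αb) hβ.top
  have := (isRegEpi_snd_of_isPullback htop hβ.top).epi
  refine IsRegEpi.of_epi_comp (e := pullback.snd βt αt) ?_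
  convert h.comparison.comp hq using 1
  apply pullback.hom_ext <;>
    simp only [Category.assoc, pullback.lift_fst, pullback.lift_snd, pullback.lift_fst_assoc,
      pullback.lift_snd_assoc, hf, pullback.condition]

/-- In a regular category, double extensions are reflected by pullbacks along
double extensions. -/
theorem statement_1 {C : Type u} [Category.{v} C] [HasFiniteLimits C] [RegularCat C]
    {A₁ A₀ B₁ B₀ X₁ X₀ : C}
    (fA : A₁ ⟶ A₀) (fB : B₁ ⟶ B₀) (fC : X₁ ⟶ X₀)
    (hfA : IsRegEpi fA) (hfB : IsRegEpi fB) (hfC : IsRegEpi fC)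
    (αt : A₁ ⟶ B₁) (αb : A₀ ⟶ B₀) (wα : αt ≫ fB = fA ≫ αb)
    (βt : X₁ ⟶ B₁) (βb : X₀ ⟶ B₀) (hβ : IsDoubleExt fC fB βt βb)
    -- the componentwise pullback `P₁ = X₁ ×_{B₁} A₁`, `P₀ = X₀ ×_{B₀} A₀` and the induced
    -- morphism `f : P₁ ⟶ P₀`:
    (f : pullback βt αt ⟶ pullback βb αb)
    (hf : f = pullback.map βt αt βb αb fC fA fB hβ.w wα)
    -- `α′ : f ⟶ f_C`, the pullback of `α` along `β`, is a double extension: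
    (h : IsDoubleExt f fC (pullback.fst βt αt) (pullback.fst βb αb)) :
    IsDoubleExt fA fB αt αb :=
  statement_1_general fA fB fC hfA hfB αt αb wα βt βb hβ f hf h

end Paper
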